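/- arXiv:2602.18762 — 9 statements merged into one kernel-verified Lean document; each statement's English description precedes it below -/
import Mathlib

section
/- Let Y₀, …, Y_m : Ω → {0, 1, …, d−1} ⊆ ℤ satisfy 0 ≤ Y_s − Y_t ≤ 1 almost surely for all s > t. Define θ(y₀) = P(Y₀ = ⋯ = Y_m = y₀) and, for k ∈ {0,…,m−1} and y₀ ∈ {0,…,d−2}, φ(y₀,k) = P(Y₀ = ⋯ = Y_k = y₀ ∧ Y_{k+1} = ⋯ = Y_m = y₀+1). Then for every i ∈ {0,…,m} and j ∈ {0,…,d−1}: P(Y_i = j) = θ(j) + Σ_{k=0}^{i−1} φ(j−1,k) + Σ_{k=i}^{m−1} φ(j,k), where by convention φ(−1,k) = φ(d−1,k) = 0. -/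
open MeasureTheory Finset

/-- Under MITE, each marginal probability P(Y_i = j) decomposes as
θ(j) + Σ_{k<i} φ(j−1,k) + Σ_{k=i}^{m−1} φ(j,k). -/
theorem mite_marginal_decomposition {Ω : Type*} [MeasurableSpace Ω] (μ : Measure Ω)
    [IsProbabilityMeasure μ] (m d : ℕ) (Y : ℕ → Ω → ℤ)
    (hmeas : ∀ i, Measurable (Y i))
    (hval : ∀ i ≤ m, ∀ ω, 0 ≤ Y i ω ∧ Y i ω < (d : ℤ))
    (hMITE : ∀ s t, t < s → s ≤ m →
      ∀ᵐ ω ∂μ, Y t ω ≤ Y s ω ∧ Y s ω ≤ Y t ω + 1)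
    (θ : ℤ → ℝ) (hθ : ∀ y, θ y = (μ {ω | ∀ i ≤ m, Y i ω = y}).toReal)
    (φ : ℤ → ℕ → ℝ)
    (hφ : ∀ y k, φ y k =
      (μ {ω | (∀ i ≤ k, Y i ω = y) ∧ ∀ i, k < i → i ≤ m → Y i ω = y + 1}).toReal) :
    ∀ i ≤ m, ∀ j : ℤ, 0 ≤ j → j < (d : ℤ) →
      (μ {ω | Y i ω = j}).toReal
        = θ j + (∑ k ∈ Finset.range i, φ (j - 1) k) + ∑ k ∈ Finset.Ico i m, φ j k := by
  intro i hi j _ _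
  classical
  set A : Set Ω := {ω | ∀ t ≤ m, Y t ω = j} with hAdef
  set B : ℕ → Set Ω := fun k =>
    {ω | (∀ t ≤ k, Y t ω = j - 1) ∧ ∀ t, k < t → t ≤ m → Y t ω = j - 1 + 1} with hBdef
  set C : ℕ → Set Ω := fun k =>
    {ω | (∀ t ≤ k, Y t ω = j) ∧ ∀ t, k < t → t ≤ m → Y t ω = j + 1} with hCdef
  -- measurability helpers
  have mset1 : ∀ (b : ℕ) (v : ℤ), MeasurableSet {ω : Ω | ∀ t ≤ b, Y t ω = v} := by
    intro b v
    have h : {ω : Ω | ∀ t ≤ b, Y t ω = v} = ⋂ t ∈ Set.Iic b, (Y t) ⁻¹' {v} := by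
      ext ω; simp
    rw [h]
    exact MeasurableSet.biInter (Set.to_countable _)
      (fun t _ => hmeas t (measurableSet_singleton v))
  have mset2 : ∀ (a b : ℕ) (v : ℤ),
      MeasurableSet {ω : Ω | ∀ t, a < t → t ≤ b → Y t ω = v} := by
    intro a b v
    have h : {ω : Ω | ∀ t, a < t → t ≤ b → Y t ω = v} = ⋂ t ∈ Set.Ioc a b, (Y t) ⁻¹' {v} := by
      ext ω; simp [Set.mem_Ioc]
    rw [h]
    exact MeasurableSet.biInter (Set.to_countable _)
      (fun t _ => hmeas t (measurableSet_singleton v))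
  have mA : MeasurableSet A := mset1 m j
  have mB : ∀ k, MeasurableSet (B k) := fun k => (mset1 k (j-1)).inter (mset2 k m (j-1+1))
  have mC : ∀ k, MeasurableSet (C k) := fun k => (mset1 k j).inter (mset2 k m (j+1))
  -- the almost sure good set
  have hG : ∀ᵐ ω ∂μ, ∀ s t, t < s → s ≤ m → Y t ω ≤ Y s ω ∧ Y s ω ≤ Y t ω + 1 := by
    rw [MeasureTheory.ae_all_iff]
    intro s
    rw [MeasureTheory.ae_all_iff]
    intro t
    by_cases h1 : t < s
    · by_cases h2 : s ≤ m
      · filter_upwards [hMITE s t h1 h2] with ω hω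
        intro _ _; exact hω
      · filter_upwards with ω h1' h2'; exact absurd h2' h2
    · filter_upwards with ω h1'; exact absurd h1' h1
  set G : Set Ω := {ω | ∀ s t, t < s → s ≤ m → Y t ω ≤ Y s ω ∧ Y s ω ≤ Y t ω + 1} with hGdef
  have hGnull : μ Gᶜ = 0 := by
    have h := MeasureTheory.ae_iff.mp hG
    simpa [hGdef, Set.compl_setOf] using h
  -- pointwise classification
  have key : ∀ ω ∈ G, Y i ω = j →
      ω ∈ A ∨ (∃ k < i, ω ∈ B k) ∨ (∃ k, i ≤ k ∧ k < m ∧ ω ∈ C k) := by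
    intro ω hgmem hYi
    have hg : ∀ s t, t < s → s ≤ m → Y t ω ≤ Y s ω ∧ Y s ω ≤ Y t ω + 1 := hgmem
    have mono : ∀ t s, t ≤ s → s ≤ m → Y t ω ≤ Y s ω := by
      intro t s hts hsm
      rcases lt_or_eq_of_le hts with h | h
      · exact (hg s t h hsm).1
      · rw [h]
    have two : ∀ t, t ≤ m → Y t ω = Y 0 ω ∨ Y t ω = Y 0 ω + 1 := by
      intro t htm
      rcases Nat.eq_zero_or_pos t with rfl | ht
      · left; rfl
      · have h := hg t 0 ht htm
        omega
    by_cases hall : Y m ω = Y 0 ω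
    · left
      have h1 := mono 0 i (Nat.zero_le i) hi
      have h2 := mono i m hi le_rfl
      intro t htm
      have h3 := mono 0 t (Nat.zero_le t) htm
      have h4 := mono t m htm le_rfl
      omega
    · set k := Nat.findGreatest (fun t => Y t ω = Y 0 ω) m with hkdef
      have hk : Y k ω = Y 0 ω := Nat.findGreatest_spec (P := fun t => Y t ω = Y 0 ω) (Nat.zero_le m) rfl
      have hkm : k ≤ m := Nat.findGreatest_le m
      have hklt : k < m := lt_of_le_of_ne hkm (by intro h; rw [h] at hk; exact hall hk)
      have down : ∀ t, t ≤ k → Y t ω = Y 0 ω := by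
        intro t htk
        have h1 := mono 0 t (Nat.zero_le t) (le_trans htk hkm)
        have h2 := mono t k htk hkm
        omega
      have up : ∀ t, k < t → t ≤ m → Y t ω = Y 0 ω + 1 := by
        intro t hkt htm
        have hnp : ¬ (Y t ω = Y 0 ω) := Nat.findGreatest_is_greatest hkt htm
        rcases two t htm with h | h
        · exact absurd h hnp
        · exact h
      by_cases hki : k < i
      · right; left
        have h0 : Y 0 ω = j - 1 := by have := up i hki hi; omega
        refine ⟨k, hki, fun t htk => by rw [down t htk, h0],
          fun t hkt htm => by rw [up t hkt htm, h0]⟩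
      · right; right
        push_neg at hki
        have h0 : Y 0 ω = j := by have := down i hki; omega
        refine ⟨k, hki, hklt, fun t htk => by rw [down t htk, h0],
          fun t hkt htm => by rw [up t hkt htm, h0]⟩
  set S : Set Ω := A ∪ ((⋃ k ∈ Finset.range i, B k) ∪ (⋃ k ∈ Finset.Ico i m, C k)) with hSdef
  have hSsub : S ⊆ {ω | Y i ω = j} := by
    intro ω hω
    rcases hω with h | h | h
    · exact h i hi
    · obtain ⟨k, hk, hmem⟩ := Set.mem_iUnion₂.mp h
      have h2 := hmem.2 i (Finset.mem_range.mp hk) hi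
      show Y i ω = j
      omega
    · obtain ⟨k, hk, hmem⟩ := Set.mem_iUnion₂.mp h
      exact hmem.1 i (Finset.mem_Ico.mp hk).1
  have hsub2 : {ω | Y i ω = j} ⊆ S ∪ Gᶜ := by
    intro ω hω
    by_cases hg : ω ∈ G
    · left
      rcases key ω hg hω with h | ⟨k, hk, h⟩ | ⟨k, hik, hkm', h⟩
      · exact Or.inl h
      · exact Or.inr (Or.inl (Set.mem_iUnion₂.mpr ⟨k, Finset.mem_range.mpr hk, h⟩))
      · exact Or.inr (Or.inr (Set.mem_iUnion₂.mpr ⟨k, Finset.mem_Ico.mpr ⟨hik, hkm'⟩, h⟩))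
    · right; exact hg
  have hμeq : μ {ω | Y i ω = j} = μ S := by
    apply le_antisymm
    · calc μ {ω | Y i ω = j} ≤ μ (S ∪ Gᶜ) := measure_mono hsub2
        _ ≤ μ S + μ Gᶜ := measure_union_le _ _
        _ = μ S := by rw [hGnull, add_zero]
    · exact measure_mono hSsub
  -- disjointness
  have dBB : ∀ a b, a < b → a < i → Disjoint (B a) (B b) := by
    intro a b hab hai
    rw [Set.disjoint_left]
    intro ω h1 h2
    have e1 : Y (a+1) ω = j - 1 + 1 := h1.2 (a+1) (Nat.lt_succ_self a) (by omega)
    have e2 : Y (a+1) ω = j - 1 := h2.1 (a+1) (by omega)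
    omega
  have dCC : ∀ a b, a < b → a < m → Disjoint (C a) (C b) := by
    intro a b hab ham
    rw [Set.disjoint_left]
    intro ω h1 h2
    have e1 : Y (a+1) ω = j + 1 := h1.2 (a+1) (Nat.lt_succ_self a) (by omega)
    have e2 : Y (a+1) ω = j := h2.1 (a+1) (by omega)
    omega
  have dAB : ∀ k, Disjoint A (B k) := by
    intro k
    rw [Set.disjoint_left]
    intro ω h1 h2
    have e1 : Y 0 ω = j := h1 0 (Nat.zero_le m)
    have e2 : Y 0 ω = j - 1 := h2.1 0 (Nat.zero_le k)
    omega
  have dAC : ∀ k, k < m → Disjoint A (C k) := by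
    intro k hk
    rw [Set.disjoint_left]
    intro ω h1 h2
    have e1 : Y m ω = j := h1 m le_rfl
    have e2 : Y m ω = j + 1 := h2.2 m hk le_rfl
    omega
  have dBC : ∀ a b, Disjoint (B a) (C b) := by
    intro a b
    rw [Set.disjoint_left]
    intro ω h1 h2
    have e1 : Y 0 ω = j - 1 := h1.1 0 (Nat.zero_le a)
    have e2 : Y 0 ω = j := h2.1 0 (Nat.zero_le b)
    omega
  have hBU : μ (⋃ k ∈ Finset.range i, B k) = ∑ k ∈ Finset.range i, μ (B k) := by
    apply measure_biUnion_finset _ (fun k _ => mB k)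
    intro a ha b hb hab
    simp only [Finset.coe_range, Set.mem_Iio] at ha hb
    rcases hab.lt_or_gt with h | h
    · exact dBB a b h ha
    · exact (dBB b a h hb).symm
  have hCU : μ (⋃ k ∈ Finset.Ico i m, C k) = ∑ k ∈ Finset.Ico i m, μ (C k) := by
    apply measure_biUnion_finset _ (fun k _ => mC k)
    intro a ha b hb hab
    simp only [Finset.coe_Ico, Set.mem_Ico] at ha hb
    rcases hab.lt_or_gt with h | h
    · exact dCC a b h ha.2
    · exact (dCC b a h hb.2).symm
  have hBUmeas : MeasurableSet (⋃ k ∈ Finset.range i, B k) :=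
    MeasurableSet.biUnion (Set.to_countable _) (fun k _ => mB k)
  have hCUmeas : MeasurableSet (⋃ k ∈ Finset.Ico i m, C k) :=
    MeasurableSet.biUnion (Set.to_countable _) (fun k _ => mC k)
  have hdisj1 : Disjoint (⋃ k ∈ Finset.range i, B k) (⋃ k ∈ Finset.Ico i m, C k) := by
    rw [Set.disjoint_left]
    intro ω h1 h2
    obtain ⟨a, -, ha⟩ := Set.mem_iUnion₂.mp h1
    obtain ⟨b, -, hb⟩ := Set.mem_iUnion₂.mp h2
    exact (Set.disjoint_left.mp (dBC a b)) ha hb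
  have hdisj0 : Disjoint A ((⋃ k ∈ Finset.range i, B k) ∪ ⋃ k ∈ Finset.Ico i m, C k) := by
    rw [Set.disjoint_left]
    intro ω h1 h2
    rcases h2 with h2 | h2
    · obtain ⟨a, -, ha⟩ := Set.mem_iUnion₂.mp h2
      exact Set.disjoint_left.mp (dAB a) h1 ha
    · obtain ⟨a, hma, ha⟩ := Set.mem_iUnion₂.mp h2
      exact Set.disjoint_left.mp (dAC a (Finset.mem_Ico.mp hma).2) h1 ha
  have hμS : μ S = μ A + (∑ k ∈ Finset.range i, μ (B k)) + ∑ k ∈ Finset.Ico i m, μ (C k) := by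
    rw [hSdef, measure_union hdisj0 (hBUmeas.union hCUmeas),
        measure_union hdisj1 hCUmeas, hBU, hCU, ← add_assoc]
  have hne : ∀ s : Set Ω, μ s ≠ ⊤ := fun s => measure_ne_top μ s
  rw [hμeq, hμS,
      ENNReal.toReal_add (ENNReal.add_ne_top.mpr
        ⟨hne A, ENNReal.sum_ne_top.mpr fun _ _ => hne _⟩)
        (ENNReal.sum_ne_top.mpr fun _ _ => hne _),
      ENNReal.toReal_add (hne A) (ENNReal.sum_ne_top.mpr fun _ _ => hne _),
      ENNReal.toReal_sum (fun _ _ => hne _), ENNReal.toReal_sum (fun _ _ => hne _)]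
  simp only [hθ, hφ, hAdef, hBdef, hCdef]
end

section
/- Let Y₀, …, Y_m : Ω → {0, 1, …, d−1} ⊆ ℤ satisfy 0 ≤ Y_s − Y_t ≤ 1 almost surely for all s > t. Then for every k ∈ {0,…,m−1} and every j ∈ {0,…,d−1}: P(Y_{k+1} = j) − P(Y_k = j) = φ(j−1,k) − φ(j,k), where φ(y₀,k) = P(Y₀ = ⋯ = Y_k = y₀ ∧ Y_{k+1} = ⋯ = Y_m = y₀+1) and φ(−1,k) = φ(d−1,k) = 0. -/
open MeasureTheory Finset

/-- Under MITE, P(Y_{k+1}=j) − P(Y_k=j) = φ(j−1,k) − φ(j,k). -/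
theorem mite_consecutive_marginal_diff {Ω : Type*} [MeasurableSpace Ω] (μ : Measure Ω)
    [IsProbabilityMeasure μ] (m d : ℕ) (Y : ℕ → Ω → ℤ)
    (hmeas : ∀ i, Measurable (Y i))
    (hval : ∀ i ≤ m, ∀ ω, 0 ≤ Y i ω ∧ Y i ω < (d : ℤ))
    (hMITE : ∀ s t, t < s → s ≤ m →
      ∀ᵐ ω ∂μ, Y t ω ≤ Y s ω ∧ Y s ω ≤ Y t ω + 1)
    (φ : ℤ → ℕ → ℝ)
    (hφ : ∀ y k, φ y k =
      (μ {ω | (∀ i ≤ k, Y i ω = y) ∧ ∀ i, k < i → i ≤ m → Y i ω = y + 1}).toReal) :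
    ∀ k < m, ∀ j : ℤ, 0 ≤ j → j < (d : ℤ) →
      (μ {ω | Y (k + 1) ω = j}).toReal - (μ {ω | Y k ω = j}).toReal
        = φ (j - 1) k - φ j k := by
  intro k hk j hj0 hjd
  rw [hφ (j - 1) k, hφ j k]
  set A : Set Ω := {ω | Y (k + 1) ω = j} with hAdef
  set B : Set Ω := {ω | Y k ω = j} with hBdef
  set C : Set Ω := {ω | (∀ i ≤ k, Y i ω = j - 1) ∧
      ∀ i, k < i → i ≤ m → Y i ω = j - 1 + 1} with hCdef
  set D : Set Ω := {ω | (∀ i ≤ k, Y i ω = j) ∧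
      ∀ i, k < i → i ≤ m → Y i ω = j + 1} with hDdef
  have hae : ∀ᵐ ω ∂μ, ∀ s t : ℕ, t < s → s ≤ m → Y t ω ≤ Y s ω ∧ Y s ω ≤ Y t ω + 1 := by
    rw [ae_all_iff]
    intro s
    rw [ae_all_iff]
    intro t
    by_cases h : t < s ∧ s ≤ m
    · filter_upwards [hMITE s t h.1 h.2] with ω hω _ _
      exact hω
    · filter_upwards with ω h1 h2
      exact absurd ⟨h1, h2⟩ h
  have mA : MeasurableSet A := hmeas (k + 1) (measurableSet_singleton j)
  have mphi : ∀ y : ℤ, MeasurableSet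
      {ω | (∀ i ≤ k, Y i ω = y) ∧ ∀ i, k < i → i ≤ m → Y i ω = y + 1} := by
    intro y
    have heq : {ω | (∀ i ≤ k, Y i ω = y) ∧ ∀ i, k < i → i ≤ m → Y i ω = y + 1}
        = (⋂ i, ⋂ _ : i ≤ k, Y i ⁻¹' {y}) ∩
          (⋂ i, ⋂ _ : k < i, ⋂ _ : i ≤ m, Y i ⁻¹' {y + 1}) := by
      ext ω; simp [Set.mem_iInter]
    rw [heq]
    exact (MeasurableSet.iInter fun i => MeasurableSet.iInter fun _ =>
        hmeas i (measurableSet_singleton y)).inter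
      (MeasurableSet.iInter fun i => MeasurableSet.iInter fun _ =>
        MeasurableSet.iInter fun _ => hmeas i (measurableSet_singleton (y + 1)))
  have mC : MeasurableSet C := mphi (j - 1)
  have mD : MeasurableSet D := mphi j
  have hCA : C ⊆ A := by
    intro ω hω
    have h2 := hω.2 (k + 1) (lt_add_one k) (by omega)
    simp only [hAdef, Set.mem_setOf_eq]
    omega
  have hDB : D ⊆ B := fun ω hω => hω.1 k le_rfl
  have hAeq : μ A = μ (A ∩ B) + μ C := by
    have hsub : ∀ᵐ ω ∂μ, ω ∈ A ↔ ω ∈ (A ∩ B) ∪ C := by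
      filter_upwards [hae] with ω hω
      constructor
      · intro hA1
        by_cases hB1 : ω ∈ B
        · exact Or.inl ⟨hA1, hB1⟩
        · right
          simp only [hAdef, Set.mem_setOf_eq] at hA1
          simp only [hBdef, Set.mem_setOf_eq] at hB1
          have h1 := hω (k + 1) k (lt_add_one k) (by omega)
          have hkk : Y k ω = j - 1 := by omega
          constructor
          · intro i hi
            rcases eq_or_lt_of_le hi with rfl | hlt
            · exact hkk
            · have h2 := hω k i hlt (by omega)
              have h3 := hω (k + 1) i (by omega) (by omega)
              omega
          · intro i hki him
            rcases eq_or_lt_of_le (Nat.succ_le_of_lt hki) with h | hlt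
            · have hik : i = k + 1 := by omega
              subst hik; omega
            · have h2 := hω i (k + 1) hlt him
              have h3 := hω i k (by omega) him
              omega
      · rintro (h | h)
        · exact h.1
        · exact hCA h
    calc μ A = μ ((A ∩ B) ∪ C) := measure_congr (Filter.eventuallyEq_set.2 hsub)
      _ = μ (A ∩ B) + μ C := by
          refine measure_union ?_ mC
          rw [Set.disjoint_left]
          intro ω hωAB hωC
          have h1 : Y k ω = j := hωAB.2
          have h2 : Y k ω = j - 1 := hωC.1 k le_rfl
          omega
  have hBeq : μ B = μ (A ∩ B) + μ D := by
    have hsub : ∀ᵐ ω ∂μ, ω ∈ B ↔ ω ∈ (A ∩ B) ∪ D := by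
      filter_upwards [hae] with ω hω
      constructor
      · intro hB1
        by_cases hA1 : ω ∈ A
        · exact Or.inl ⟨hA1, hB1⟩
        · right
          simp only [hAdef, Set.mem_setOf_eq] at hA1
          simp only [hBdef, Set.mem_setOf_eq] at hB1
          have h1 := hω (k + 1) k (lt_add_one k) (by omega)
          have hkk : Y (k + 1) ω = j + 1 := by omega
          constructor
          · intro i hi
            rcases eq_or_lt_of_le hi with rfl | hlt
            · exact hB1
            · have h2 := hω k i hlt (by omega)
              have h3 := hω (k + 1) i (by omega) (by omega)
              omega
          · intro i hki him
            rcases eq_or_lt_of_le (Nat.succ_le_of_lt hki) with h | hlt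
            · have hik : i = k + 1 := by omega
              subst hik; omega
            · have h2 := hω i (k + 1) hlt him
              have h3 := hω i k (by omega) him
              omega
      · rintro (h | h)
        · exact h.2
        · exact hDB h
    calc μ B = μ ((A ∩ B) ∪ D) := measure_congr (Filter.eventuallyEq_set.2 hsub)
      _ = μ (A ∩ B) + μ D := by
          refine measure_union ?_ mD
          rw [Set.disjoint_left]
          intro ω hωAB hωD
          have h1 : Y (k + 1) ω = j := hωAB.1
          have h2 : Y (k + 1) ω = j + 1 := hωD.2 (k + 1) (lt_add_one k) (by omega)
          omega
  rw [hAeq, hBeq, ENNReal.toReal_add (measure_ne_top μ _) (measure_ne_top μ _),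
    ENNReal.toReal_add (measure_ne_top μ _) (measure_ne_top μ _)]
  ring
end

section
/- Let Y₀, …, Y_m : Ω → {0, 1, …, d−1} ⊆ ℤ satisfy 0 ≤ Y_s − Y_t ≤ 1 almost surely for all s > t. Then for every k ∈ {0,…,m−1} and y₀ ∈ {0,…,d−2}: P(Y₀ = ⋯ = Y_k = y₀ ∧ Y_{k+1} = ⋯ = Y_m = y₀+1) = Σ_{j=0}^{y₀} (P(Y_k = j) − P(Y_{k+1} = j)). In particular, the joint step probability is identified from the marginal distributions of Y_k and Y_{k+1}. -/
open MeasureTheory Finset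

/-- Under MITE, the step probability φ(y₀,k) is identified from the
marginal distributions of Y_k and Y_{k+1}. -/
theorem mite_step_identification {Ω : Type*} [MeasurableSpace Ω] (μ : Measure Ω)
    [IsProbabilityMeasure μ] (m d : ℕ) (Y : ℕ → Ω → ℤ)
    (hmeas : ∀ i, Measurable (Y i))
    (hval : ∀ i ≤ m, ∀ ω, 0 ≤ Y i ω ∧ Y i ω < (d : ℤ))
    (hMITE : ∀ s t, t < s → s ≤ m →
      ∀ᵐ ω ∂μ, Y t ω ≤ Y s ω ∧ Y s ω ≤ Y t ω + 1) :
    ∀ k < m, ∀ y₀ : ℕ, (y₀ : ℤ) + 1 < (d : ℤ) →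
      (μ {ω | (∀ i ≤ k, Y i ω = (y₀ : ℤ)) ∧
          ∀ i, k < i → i ≤ m → Y i ω = (y₀ : ℤ) + 1}).toReal
        = ∑ j ∈ Finset.range (y₀ + 1),
            ((μ {ω | Y k ω = (j : ℤ)}).toReal - (μ {ω | Y (k + 1) ω = (j : ℤ)}).toReal) := by
  intro k hk y₀ _hy
  have hk1 : k + 1 ≤ m := hk
  have hmono : ∀ᵐ ω ∂μ, Y k ω ≤ Y (k+1) ω ∧ Y (k+1) ω ≤ Y k ω + 1 :=
    hMITE (k+1) k (Nat.lt_succ_self k) hk1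
  have hall : ∀ᵐ ω ∂μ, ∀ s t, t < s → s ≤ m → Y t ω ≤ Y s ω ∧ Y s ω ≤ Y t ω + 1 := by
    rw [MeasureTheory.ae_all_iff]; intro s
    rw [MeasureTheory.ae_all_iff]; intro t
    by_cases h : t < s ∧ s ≤ m
    · filter_upwards [hMITE s t h.1 h.2] with ω hω _ _; exact hω
    · filter_upwards with ω h1 h2; exact absurd ⟨h1, h2⟩ h
  have hSmeas : ∀ a b : ℤ, MeasurableSet {ω | Y k ω = a ∧ Y (k+1) ω = b} :=
    fun a b => (hmeas k (measurableSet_singleton a)).inter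
      (hmeas (k+1) (measurableSet_singleton b))
  set F : ℤ → ℤ → ℝ := fun a b => (μ {ω | Y k ω = a ∧ Y (k+1) ω = b}).toReal with hF
  -- Step A : the joint event a.e. equals the two-coordinate event
  have hA : (μ {ω | (∀ i ≤ k, Y i ω = (y₀ : ℤ)) ∧
      ∀ i, k < i → i ≤ m → Y i ω = (y₀ : ℤ) + 1}).toReal = F (y₀ : ℤ) ((y₀ : ℤ) + 1) := by
    have : μ {ω | (∀ i ≤ k, Y i ω = (y₀ : ℤ)) ∧
        ∀ i, k < i → i ≤ m → Y i ω = (y₀ : ℤ) + 1}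
        = μ {ω | Y k ω = (y₀ : ℤ) ∧ Y (k+1) ω = (y₀ : ℤ) + 1} := by
      apply measure_congr
      rw [Filter.eventuallyEq_set]
      filter_upwards [hall] with ω hω
      constructor
      · rintro ⟨h1, h2⟩; exact ⟨h1 k le_rfl, h2 (k+1) (Nat.lt_succ_self k) hk1⟩
      · rintro ⟨h1, h2⟩
        constructor
        · intro i hi
          rcases eq_or_lt_of_le hi with rfl | hi'
          · exact h1
          · have a := hω k i hi' hk.le
            have b := hω (k+1) i (by omega) hk1
            omega
        · intro i hik him
          rcases Nat.lt_or_ge i (k+2) with hi' | hi'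
          · have hik1 : i = k+1 := by omega
            rw [hik1]; exact h2
          · have a := hω i k (by omega) him
            have b := hω i (k+1) (by omega) him
            omega
    rw [this]
  -- Marginal decompositions
  have hB1 : ∀ j : ℤ, (μ {ω | Y k ω = j}).toReal = F j j + F j (j+1) := by
    intro j
    have hU : μ {ω | Y k ω = j}
        = μ ({ω | Y k ω = j ∧ Y (k+1) ω = j} ∪ {ω | Y k ω = j ∧ Y (k+1) ω = j+1}) := by
      apply measure_congr
      rw [Filter.eventuallyEq_set]
      filter_upwards [hmono] with ω hω
      simp only [Set.mem_setOf_eq, Set.mem_union]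
      omega
    have hd : Disjoint {ω | Y k ω = j ∧ Y (k+1) ω = j} {ω | Y k ω = j ∧ Y (k+1) ω = j+1} := by
      rw [Set.disjoint_left]; rintro ω ⟨_, h1⟩ ⟨_, h2⟩; omega
    rw [hU, measure_union hd (hSmeas j (j+1)),
      ENNReal.toReal_add (measure_ne_top μ _) (measure_ne_top μ _)]
  have hB2 : ∀ j : ℤ, (μ {ω | Y (k+1) ω = j}).toReal = F (j-1) j + F j j := by
    intro j
    have hU : μ {ω | Y (k+1) ω = j}
        = μ ({ω | Y k ω = j-1 ∧ Y (k+1) ω = j} ∪ {ω | Y k ω = j ∧ Y (k+1) ω = j}) := by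
      apply measure_congr
      rw [Filter.eventuallyEq_set]
      filter_upwards [hmono] with ω hω
      simp only [Set.mem_setOf_eq, Set.mem_union]
      omega
    have hd : Disjoint {ω | Y k ω = j-1 ∧ Y (k+1) ω = j} {ω | Y k ω = j ∧ Y (k+1) ω = j} := by
      rw [Set.disjoint_left]; rintro ω ⟨h1, _⟩ ⟨h2, _⟩; omega
    rw [hU, measure_union hd (hSmeas j j),
      ENNReal.toReal_add (measure_ne_top μ _) (measure_ne_top μ _)]
  -- telescoping
  set g : ℕ → ℝ := fun j => F ((j : ℤ) - 1) (j : ℤ) with hg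
  have hg0 : g 0 = 0 := by
    have he : {ω | Y k ω = ((0:ℕ):ℤ) - 1 ∧ Y (k+1) ω = ((0:ℕ):ℤ)} = (∅ : Set Ω) := by
      ext ω
      simp only [Set.mem_setOf_eq, Set.mem_empty_iff_false, iff_false, not_and]
      intro h1
      have := (hval k hk.le ω).1
      omega
    simp only [hg, hF, he, measure_empty, ENNReal.toReal_zero]
  have hgs : ∀ j : ℕ, g (j+1) = F (j : ℤ) ((j : ℤ) + 1) := by
    intro j
    have e2 : ((j+1 : ℕ) : ℤ) = (j : ℤ) + 1 := by push_cast; ring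
    simp only [hg, e2, add_sub_cancel_right]
  have hsum : ∀ j : ℕ,
      (μ {ω | Y k ω = (j : ℤ)}).toReal - (μ {ω | Y (k + 1) ω = (j : ℤ)}).toReal
        = g (j+1) - g j := by
    intro j
    rw [hB1 (j : ℤ), hB2 (j : ℤ), hgs j]
    simp only [hg]
    ring
  calc (μ {ω | (∀ i ≤ k, Y i ω = (y₀ : ℤ)) ∧
          ∀ i, k < i → i ≤ m → Y i ω = (y₀ : ℤ) + 1}).toReal
      = F (y₀ : ℤ) ((y₀ : ℤ) + 1) := hA
    _ = g (y₀ + 1) - g 0 := by rw [hgs, hg0, sub_zero]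
    _ = ∑ j ∈ Finset.range (y₀ + 1), (g (j+1) - g j) := (Finset.sum_range_sub g (y₀+1)).symm
    _ = ∑ j ∈ Finset.range (y₀ + 1),
          ((μ {ω | Y k ω = (j : ℤ)}).toReal - (μ {ω | Y (k + 1) ω = (j : ℤ)}).toReal) :=
        Finset.sum_congr rfl fun j _ => (hsum j).symm
end

section
/- Let Y₀, …, Y_m : Ω → {0, 1, …, d−1} ⊆ ℤ satisfy 0 ≤ Y_s − Y_t ≤ 1 almost surely for all s > t. Then for every y₀ ∈ {0,…,d−1}: P(Y₀ = Y₁ = ⋯ = Y_m = y₀) = Σ_{j=0}^{y₀} P(Y_m = j) − Σ_{j=0}^{y₀−1} P(Y₀ = j). -/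
open MeasureTheory Finset

lemma sum_point_masses {Ω : Type*} [MeasurableSpace Ω] (μ : Measure Ω)
    [IsFiniteMeasure μ] (Z : Ω → ℤ) (hZ : Measurable Z) (hpos : ∀ ω, 0 ≤ Z ω) (n : ℕ) :
    ∑ j ∈ Finset.range n, (μ {ω | Z ω = (j : ℤ)}).toReal
      = (μ {ω | Z ω < (n : ℤ)}).toReal := by
  induction n with
  | zero =>
    have h : {ω | Z ω < ((0 : ℕ) : ℤ)} = ∅ := by
      ext ω; simp [not_lt.2 (hpos ω)]
    simp only [Nat.cast_zero] at h
    simp [h]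
  | succ n ih =>
    rw [Finset.sum_range_succ, ih]
    have hset : {ω | Z ω < ((n + 1 : ℕ) : ℤ)} = {ω | Z ω < (n : ℤ)} ∪ {ω | Z ω = (n : ℤ)} := by
      ext ω; simp only [Set.mem_setOf_eq, Set.mem_union]
      push_cast
      omega
    have hdisj : Disjoint {ω | Z ω < (n : ℤ)} {ω | Z ω = (n : ℤ)} := by
      rw [Set.disjoint_left]
      intro ω h1 h2
      simp only [Set.mem_setOf_eq] at h1 h2
      omega
    rw [hset, measure_union hdisj (hZ (measurableSet_singleton _)),
      ENNReal.toReal_add (measure_ne_top _ _) (measure_ne_top _ _)]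

/-- Under MITE, the probability that all potential outcomes coincide
at level y₀ is identified from the marginals of Y₀ and Y_m. -/
theorem mite_allequal_identification {Ω : Type*} [MeasurableSpace Ω] (μ : Measure Ω)
    [IsProbabilityMeasure μ] (m d : ℕ) (Y : ℕ → Ω → ℤ)
    (hmeas : ∀ i, Measurable (Y i))
    (hval : ∀ i ≤ m, ∀ ω, 0 ≤ Y i ω ∧ Y i ω < (d : ℤ))
    (hMITE : ∀ s t, t < s → s ≤ m →
      ∀ᵐ ω ∂μ, Y t ω ≤ Y s ω ∧ Y s ω ≤ Y t ω + 1) :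
    ∀ y₀ : ℕ, (y₀ : ℤ) < (d : ℤ) →
      (μ {ω | ∀ i ≤ m, Y i ω = (y₀ : ℤ)}).toReal
        = (∑ j ∈ Finset.range (y₀ + 1), (μ {ω | Y m ω = (j : ℤ)}).toReal)
          - ∑ j ∈ Finset.range y₀, (μ {ω | Y 0 ω = (j : ℤ)}).toReal := by
  intro y₀ _
  -- combine MITE into one a.e. statement
  have H : ∀ᵐ ω ∂μ, ∀ s t, t < s → s ≤ m → Y t ω ≤ Y s ω ∧ Y s ω ≤ Y t ω + 1 := by
    rw [MeasureTheory.ae_all_iff]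
    intro s
    rw [MeasureTheory.ae_all_iff]
    intro t
    by_cases h1 : t < s
    · by_cases h2 : s ≤ m
      · filter_upwards [hMITE s t h1 h2] with ω h _ _; exact h
      · filter_upwards with ω _ hs; exact absurd hs h2
    · filter_upwards with ω ht; exact absurd ht h1
  set A := {ω | ∀ i ≤ m, Y i ω = (y₀ : ℤ)} with hA
  set B := {ω | Y m ω < ((y₀ : ℤ) + 1)} with hB
  set C := {ω | Y 0 ω < (y₀ : ℤ)} with hC
  have hAmeas : MeasurableSet A := by
    have : A = ⋂ i, {ω | i ≤ m → Y i ω = (y₀ : ℤ)} := by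
      ext ω; simp [hA, Set.mem_iInter]
    rw [this]
    refine MeasurableSet.iInter fun i => ?_
    by_cases hi : i ≤ m
    · have : {ω | i ≤ m → Y i ω = (y₀ : ℤ)} = {ω | Y i ω = (y₀ : ℤ)} := by
        ext ω; simp [hi]
      rw [this]; exact hmeas i (measurableSet_singleton _)
    · have : {ω | i ≤ m → Y i ω = (y₀ : ℤ)} = Set.univ := by
        ext ω; simp [hi]
      rw [this]; exact MeasurableSet.univ
  have hCmeas : MeasurableSet C := hmeas 0 measurableSet_Iio
  have hdisj : Disjoint A C := by
    rw [Set.disjoint_left]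
    intro ω hωA hωC
    have h0 : Y 0 ω = (y₀ : ℤ) := hωA 0 (Nat.zero_le m)
    simp only [hC, Set.mem_setOf_eq] at hωC
    omega
  -- a.e., B = A ∪ C
  have hkey : ∀ᵐ ω ∂μ, (ω ∈ B ↔ ω ∈ A ∪ C) := by
    filter_upwards [H] with ω h
    have hord : ∀ i ≤ m, Y 0 ω ≤ Y i ω ∧ Y i ω ≤ Y m ω := by
      intro i hi
      constructor
      · rcases Nat.eq_zero_or_pos i with h0 | h0
        · subst h0; exact le_rfl
        · exact (h i 0 h0 hi).1
      · rcases eq_or_lt_of_le hi with h0 | h0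
        · subst h0; exact le_rfl
        · exact (h m i h0 le_rfl).1
    have hstep : Y m ω ≤ Y 0 ω + 1 := by
      rcases Nat.eq_zero_or_pos m with h0 | h0
      · rw [h0]; omega
      · exact (h m 0 h0 le_rfl).2
    simp only [hA, hB, hC, Set.mem_union, Set.mem_setOf_eq]
    constructor
    · intro hBω
      by_cases hCω : Y 0 ω < (y₀ : ℤ)
      · exact Or.inr hCω
      · refine Or.inl fun i hi => ?_
        have := hord i hi
        omega
    · rintro (hAω | hCω)
      · have := hAω m le_rfl; omega
      · omega
  have hBAC : μ B = μ A + μ C := by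
    have : μ B = μ (A ∪ C) := measure_congr (Filter.eventuallyEq_set.2 hkey)
    rw [this, measure_union hdisj hCmeas]
  have hsum1 : ∑ j ∈ Finset.range (y₀ + 1), (μ {ω | Y m ω = (j : ℤ)}).toReal
      = (μ B).toReal := by
    rw [sum_point_masses μ (Y m) (hmeas m) (fun ω => (hval m le_rfl ω).1)]
    norm_cast
  have hsum2 : ∑ j ∈ Finset.range y₀, (μ {ω | Y 0 ω = (j : ℤ)}).toReal
      = (μ C).toReal := by
    rw [sum_point_masses μ (Y 0) (hmeas 0) (fun ω => (hval 0 (Nat.zero_le m) ω).1)]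
  rw [hsum1, hsum2, hBAC, ENNReal.toReal_add (measure_ne_top _ _) (measure_ne_top _ _)]
  ring
end

section
/- Let (Y₀, …, Y_m) and (Z₀, …, Z_m) be two families of random variables with values in {0,…,d−1} ⊆ ℤ, each satisfying the MITE condition (0 ≤ Y_s − Y_t ≤ 1 and 0 ≤ Z_s − Z_t ≤ 1 almost surely for all s > t). If Y_i and Z_i have the same marginal distribution for every i ∈ {0,…,m}, then the joint distributions of (Y₀,…,Y_m) and (Z₀,…,Z_m) coincide. -/
open MeasureTheory

/-- Auxiliary: if `E` a.e. equals `A \ B` and `B` is a.e. contained in `A`, then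
`μ E + μ B = μ A`. -/
lemma mite_aux_eq_diff {Ω : Type*} [MeasurableSpace Ω] (μ : Measure Ω)
    (E A B : Set Ω) (hB : MeasurableSet B)
    (hEA : ∀ᵐ ω ∂μ, ω ∈ E ↔ ω ∈ A \ B)
    (hBA : ∀ᵐ ω ∂μ, ω ∈ B → ω ∈ A) :
    μ E + μ B = μ A := by
  have h1 : μ E = μ (A \ B) := measure_congr (Filter.eventuallyEq_set.mpr hEA)
  have h2 : μ (A ∩ B) = μ B :=
    measure_congr (Filter.eventuallyEq_set.mpr (hBA.mono fun ω h =>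
      ⟨fun hx => hx.2, fun hx => ⟨h hx, hx⟩⟩))
  rw [h1, ← h2, add_comm]
  exact measure_inter_add_diff A hB

/-- Auxiliary: constant case. -/
lemma mite_aux_const {Ω : Type*} [MeasurableSpace Ω] (μ : Measure Ω)
    (m : ℕ) (Y : ℕ → Ω → ℤ) (hmeas : ∀ i, Measurable (Y i))
    (hG : ∀ᵐ ω ∂μ, ∀ s t, s ≤ m → t < s → Y t ω ≤ Y s ω ∧ Y s ω ≤ Y t ω + 1)
    (v : ℕ → ℤ) (hvc : ∀ i ≤ m, v i = v 0) :
    μ {ω | ∀ i ≤ m, Y i ω = v i} + μ {ω | v 0 + 1 ≤ Y m ω} = μ {ω | v 0 ≤ Y 0 ω} := by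
  apply mite_aux_eq_diff μ _ _ _ ((hmeas m) measurableSet_Ici)
  · filter_upwards [hG] with ω hω
    constructor
    · intro hE
      have h0 : Y 0 ω = v 0 := hE 0 (Nat.zero_le m)
      have hm : Y m ω = v m := hE m le_rfl
      have hvm : v m = v 0 := hvc m le_rfl
      exact ⟨show v 0 ≤ Y 0 ω by omega, show ¬ v 0 + 1 ≤ Y m ω by omega⟩
    · intro hAB
      rw [Set.mem_diff] at hAB
      obtain ⟨hA, hB⟩ := hAB
      have hA' : v 0 ≤ Y 0 ω := hA
      have hB' : ¬ v 0 + 1 ≤ Y m ω := hB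
      clear hA hB
      intro i hi
      rw [hvc i hi]
      have h1 : v 0 ≤ Y i ω := by
        rcases Nat.eq_zero_or_pos i with h | h
        · rw [h]; exact hA' 
        · have := (hω i 0 hi h).1; linarith
      have h2 : Y i ω ≤ v 0 := by
        have hYm : Y m ω ≤ v 0 := by omega
        rcases eq_or_lt_of_le hi with h | h
        · rw [h]; exact hYm
        · have := (hω m i le_rfl h).1; linarith
      omega
  · filter_upwards [hG] with ω hω hB
    have hB' : v 0 + 1 ≤ Y m ω := hB
    show v 0 ≤ Y 0 ω
    rcases Nat.eq_zero_or_pos m with h | h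
    · subst h; omega
    · have := (hω m 0 le_rfl h).2; omega

/-- Auxiliary: jump case. -/
lemma mite_aux_jump {Ω : Type*} [MeasurableSpace Ω] (μ : Measure Ω)
    (m : ℕ) (Y : ℕ → Ω → ℤ) (hmeas : ∀ i, Measurable (Y i))
    (hG : ∀ᵐ ω ∂μ, ∀ s t, s ≤ m → t < s → Y t ω ≤ Y s ω ∧ Y s ω ≤ Y t ω + 1)
    (v : ℕ → ℤ) (k : ℕ) (hk1 : 1 ≤ k) (hkm : k ≤ m)
    (hlow : ∀ i < k, v i = v 0) (hhigh : ∀ i, k ≤ i → i ≤ m → v i = v 0 + 1) :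
    μ {ω | ∀ i ≤ m, Y i ω = v i} + μ {ω | v 0 + 1 ≤ Y (k - 1) ω}
      = μ {ω | v 0 + 1 ≤ Y k ω} := by
  apply mite_aux_eq_diff μ _ _ _ ((hmeas (k - 1)) measurableSet_Ici)
  · filter_upwards [hG] with ω hω
    constructor
    · intro hE
      have hk : Y k ω = v k := hE k hkm
      have hk' : Y (k - 1) ω = v (k - 1) := hE (k - 1) (le_trans (Nat.sub_le k 1) hkm)
      have hvk : v k = v 0 + 1 := hhigh k le_rfl hkm
      have hvk' : v (k - 1) = v 0 := hlow (k - 1) (by omega)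
      exact ⟨show v 0 + 1 ≤ Y k ω by omega,
        show ¬ v 0 + 1 ≤ Y (k - 1) ω by omega⟩
    · intro hAB
      rw [Set.mem_diff] at hAB
      obtain ⟨hA, hB⟩ := hAB
      have hA' : v 0 + 1 ≤ Y k ω := hA
      have hB' : ¬ v 0 + 1 ≤ Y (k - 1) ω := hB
      clear hA hB
      intro i hi
      by_cases hik : i < k
      · rw [hlow i hik]
        have h1 : Y i ω ≤ Y (k - 1) ω := by
          rcases eq_or_lt_of_le (Nat.le_sub_one_of_lt hik) with h | h
          · rw [h]
          · exact (hω (k - 1) i (le_trans (Nat.sub_le k 1) hkm) h).1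
        have h2 : Y k ω ≤ Y i ω + 1 := (hω k i hkm hik).2
        omega
      · push_neg at hik
        rw [hhigh i hik hi]
        have h1 : Y k ω ≤ Y i ω := by
          rcases eq_or_lt_of_le hik with h | h
          · rw [h]
          · exact (hω i k hi h).1
        have h2 : Y i ω ≤ Y (k - 1) ω + 1 :=
          (hω i (k - 1) hi (by omega)).2
        omega
  · filter_upwards [hG] with ω hω hB
    have hB' : v 0 + 1 ≤ Y (k - 1) ω := hB
    show v 0 + 1 ≤ Y k ω
    have := (hω k (k - 1) hkm (by omega)).1
    omega

/-- Under MITE, matching marginal distributions imply matching joint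
distributions. -/
theorem mite_joint_determined_by_marginals {Ω₁ Ω₂ : Type*}
    [MeasurableSpace Ω₁] [MeasurableSpace Ω₂]
    (μ : Measure Ω₁) (ν : Measure Ω₂)
    [IsProbabilityMeasure μ] [IsProbabilityMeasure ν]
    (m d : ℕ) (Y : ℕ → Ω₁ → ℤ) (Z : ℕ → Ω₂ → ℤ)
    (hmeasY : ∀ i, Measurable (Y i)) (hmeasZ : ∀ i, Measurable (Z i))
    (hvalY : ∀ i ≤ m, ∀ ω, 0 ≤ Y i ω ∧ Y i ω < (d : ℤ))
    (hvalZ : ∀ i ≤ m, ∀ ω, 0 ≤ Z i ω ∧ Z i ω < (d : ℤ))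
    (hMITEY : ∀ s t, t < s → s ≤ m →
      ∀ᵐ ω ∂μ, Y t ω ≤ Y s ω ∧ Y s ω ≤ Y t ω + 1)
    (hMITEZ : ∀ s t, t < s → s ≤ m →
      ∀ᵐ ω ∂ν, Z t ω ≤ Z s ω ∧ Z s ω ≤ Z t ω + 1)
    (hmarg : ∀ i ≤ m, ∀ j : ℤ, μ {ω | Y i ω = j} = ν {ω | Z i ω = j}) :
    ∀ v : ℕ → ℤ,
      μ {ω | ∀ i ≤ m, Y i ω = v i} = ν {ω | ∀ i ≤ m, Z i ω = v i} := by
  classical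
  intro v
  -- combined a.e. MITE statements
  have hGY : ∀ᵐ ω ∂μ, ∀ s t, s ≤ m → t < s → Y t ω ≤ Y s ω ∧ Y s ω ≤ Y t ω + 1 := by
    rw [MeasureTheory.ae_all_iff]
    intro s
    rw [MeasureTheory.ae_all_iff]
    intro t
    by_cases h : s ≤ m ∧ t < s
    · filter_upwards [hMITEY s t h.2 h.1] with ω hω _ _; exact hω
    · filter_upwards with ω hs ht; exact absurd ⟨hs, ht⟩ h
  have hGZ : ∀ᵐ ω ∂ν, ∀ s t, s ≤ m → t < s → Z t ω ≤ Z s ω ∧ Z s ω ≤ Z t ω + 1 := by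
    rw [MeasureTheory.ae_all_iff]
    intro s
    rw [MeasureTheory.ae_all_iff]
    intro t
    by_cases h : s ≤ m ∧ t < s
    · filter_upwards [hMITEZ s t h.2 h.1] with ω hω _ _; exact hω
    · filter_upwards with ω hs ht; exact absurd ⟨hs, ht⟩ h
  -- upper tail probabilities agree
  have hU : ∀ i ≤ m, ∀ j : ℤ, μ {ω | j ≤ Y i ω} = ν {ω | j ≤ Z i ω} := by
    intro i hi j
    have hYset : {ω | j ≤ Y i ω} = ⋃ j' ∈ Finset.Icc j ((d : ℤ) - 1), {ω | Y i ω = j'} := by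
      ext ω
      simp only [Set.mem_setOf_eq, Set.mem_iUnion, Finset.mem_Icc]
      constructor
      · intro h
        exact ⟨Y i ω, ⟨h, by have := (hvalY i hi ω).2; omega⟩, rfl⟩
      · rintro ⟨j', ⟨⟨h1, _⟩, rfl⟩⟩
        exact h1
    have hZset : {ω | j ≤ Z i ω} = ⋃ j' ∈ Finset.Icc j ((d : ℤ) - 1), {ω | Z i ω = j'} := by
      ext ω
      simp only [Set.mem_setOf_eq, Set.mem_iUnion, Finset.mem_Icc]
      constructor
      · intro h
        exact ⟨Z i ω, ⟨h, by have := (hvalZ i hi ω).2; omega⟩, rfl⟩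
      · rintro ⟨j', ⟨⟨h1, _⟩, rfl⟩⟩
        exact h1
    rw [hYset, hZset, measure_biUnion_finset ?_ ?_, measure_biUnion_finset ?_ ?_]
    · exact Finset.sum_congr rfl fun j' _ => hmarg i hi j'
    · intro a _ b _ hab
      exact Set.disjoint_left.2 fun ω ha hb => hab (ha.symm.trans hb)
    · exact fun b _ => (hmeasZ i) (measurableSet_singleton b)
    · intro a _ b _ hab
      exact Set.disjoint_left.2 fun ω ha hb => hab (ha.symm.trans hb)
    · exact fun b _ => (hmeasY i) (measurableSet_singleton b)
  by_cases hv : ∀ s t, s ≤ m → t < s → v t ≤ v s ∧ v s ≤ v t + 1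
  · by_cases hm : v m = v 0
    · -- constant case
      have hvc : ∀ i ≤ m, v i = v 0 := by
        intro i hi
        rcases Nat.eq_zero_or_pos i with h | h
        · rw [h]
        · have h1 := (hv i 0 hi h).1
          rcases eq_or_lt_of_le hi with h' | h'
          · rw [h', hm]
          · have h2 := (hv m i le_rfl h').1
            omega
      have cY := mite_aux_const μ m Y hmeasY hGY v hvc
      have cZ := mite_aux_const ν m Z hmeasZ hGZ v hvc
      rw [hU m le_rfl (v 0 + 1), hU 0 (Nat.zero_le m) (v 0)] at cY
      rw [← cZ] at cY
      exact WithTop.add_right_cancel (measure_ne_top ν _) cY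
    · -- jump case
      have hmpos : 0 < m := by
        rcases Nat.eq_zero_or_pos m with h | h
        · exact absurd (by rw [h]) hm
        · exact h
      have hm' : v m = v 0 + 1 := by
        have := hv m 0 le_rfl hmpos
        omega
      have hex : ∃ i, v i = v 0 + 1 := ⟨m, hm'⟩
      set k := Nat.find hex with hkdef
      have hks : v k = v 0 + 1 := Nat.find_spec hex
      have hkm : k ≤ m := Nat.find_min' hex hm'
      have hk1 : 1 ≤ k := by
        by_contra h
        push_neg at h
        interval_cases k
        omega
      have hlow : ∀ i < k, v i = v 0 := by
        intro i hik
        have hne : v i ≠ v 0 + 1 := Nat.find_min hex hik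
        rcases Nat.eq_zero_or_pos i with h | h
        · rw [h]
        · have := hv i 0 (le_trans (le_of_lt hik) hkm) h
          omega
      have hhigh : ∀ i, k ≤ i → i ≤ m → v i = v 0 + 1 := by
        intro i hki him
        rcases eq_or_lt_of_le hki with h | h
        · rw [← h, hks]
        · have h1 := (hv i k him h).1
          have h2 := (hv i 0 him (by omega)).2
          omega
      have cY := mite_aux_jump μ m Y hmeasY hGY v k hk1 hkm hlow hhigh
      have cZ := mite_aux_jump ν m Z hmeasZ hGZ v k hk1 hkm hlow hhigh
      rw [hU k hkm (v 0 + 1), hU (k - 1) (le_trans (Nat.sub_le k 1) hkm) (v 0 + 1)] at cY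
      rw [← cZ] at cY
      exact WithTop.add_right_cancel (measure_ne_top ν _) cY
  · -- invalid vector: both sides are zero
    push_neg at hv
    obtain ⟨s, t, hs, hts, hbad⟩ := hv
    have htm : t ≤ m := le_trans (le_of_lt hts) hs
    have hY0 : μ {ω | ∀ i ≤ m, Y i ω = v i} = 0 := by
      rw [measure_eq_zero_iff_ae_notMem]
      filter_upwards [hGY] with ω hω hE
      have h1 := hE s hs
      have h2 := hE t htm
      have h3 := hω s t hs hts
      rw [h1, h2] at h3
      omega
    have hZ0 : ν {ω | ∀ i ≤ m, Z i ω = v i} = 0 := by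
      rw [measure_eq_zero_iff_ae_notMem]
      filter_upwards [hGZ] with ω hω hE
      have h1 := hE s hs
      have h2 := hE t htm
      have h3 := hω s t hs hts
      rw [h1, h2] at h3
      omega
    rw [hY0, hZ0]
end

section
/- Let X, Y₀, …, Y_m be random variables on a probability space, where X takes values in {0,…,m} and each Y_i takes values in {0,…,d−1} ⊆ ℤ, with observed outcome Y = Y_X. Assume (i) each Y_x is independent of X with P(X=x) > 0 for all x, (ii) the whole vector (Y₀,…,Y_m) is independent of X, and (iii) 0 ≤ Y_s − Y_t ≤ 1 almost surely for all s > t. Then for every y₀ ∈ {0,…,d−1} and x ∈ {0,…,m}: P(Y₀ = ⋯ = Y_m = y₀ ∧ X = x ∧ Y = y₀) = (Σ_{j=0}^{y₀} P(Y = j | X = m) − Σ_{j=0}^{y₀−1} P(Y = j | X = 0)) · P(X = x). -/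
open MeasureTheory ProbabilityTheory Finset
open scoped ProbabilityTheory

/-- Under exogeneity and MITE, the joint probability
P(Y₀ = ⋯ = Y_m = y₀, X = x, Y = y₀) is identified from observational data. -/
theorem mite_exogeneity_full_identification {Ω : Type*} [MeasurableSpace Ω]
    (μ : Measure Ω) [IsProbabilityMeasure μ]
    (m d : ℕ) (X : Ω → ℕ) (hX : Measurable X) (hXm : ∀ ω, X ω ≤ m)
    (Y : ℕ → Ω → ℤ) (hY : ∀ i, Measurable (Y i))
    (hval : ∀ i ≤ m, ∀ ω, 0 ≤ Y i ω ∧ Y i ω < (d : ℤ))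
    (hindep : ∀ x ≤ m, IndepFun (Y x) X μ)
    (hpos : ∀ x ≤ m, μ {ω | X ω = x} ≠ 0)
    (hexo : IndepFun (fun ω => fun i : Fin (m + 1) => Y (i : ℕ) ω) X μ)
    (hMITE : ∀ s t, t < s → s ≤ m →
      ∀ᵐ ω ∂μ, Y t ω ≤ Y s ω ∧ Y s ω ≤ Y t ω + 1) :
    ∀ y₀ : ℕ, (y₀ : ℤ) < (d : ℤ) → ∀ x ≤ m,
      (μ {ω | (∀ i ≤ m, Y i ω = (y₀ : ℤ)) ∧ X ω = x ∧ Y (X ω) ω = (y₀ : ℤ)}).toReal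
        = ((∑ j ∈ Finset.range (y₀ + 1),
              (μ[|{ω | X ω = m}] {ω | Y (X ω) ω = (j : ℤ)}).toReal)
            - ∑ j ∈ Finset.range y₀,
              (μ[|{ω | X ω = 0}] {ω | Y (X ω) ω = (j : ℤ)}).toReal)
          * (μ {ω | X ω = x}).toReal := by
  intro y₀ hy₀ x hx
  have hmX : ∀ c : ℕ, MeasurableSet {ω | X ω = c} := fun c => hX (measurableSet_singleton c)
  have hmY : ∀ i (c : ℤ), MeasurableSet {ω | Y i ω = c} :=
    fun i c => hY i (measurableSet_singleton c)
  set A : Set Ω := {ω | ∀ i ≤ m, Y i ω = (y₀ : ℤ)} with hA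
  set Cm : Set Ω := {ω | Y m ω ≤ (y₀ : ℤ)} with hCmdef
  set C0 : Set Ω := {ω | Y 0 ω ≤ (y₀ : ℤ) - 1} with hC0def
  have hmA : MeasurableSet A := by
    have : A = ⋂ i ∈ Finset.Iic m, {ω | Y i ω = (y₀ : ℤ)} := by
      ext ω; simp [hA]
    rw [this]
    exact Finset.measurableSet_biInter _ (fun i _ => hmY i _)
  have hmCm : MeasurableSet Cm := hY m measurableSet_Iic
  have hmC0 : MeasurableSet C0 := hY 0 measurableSet_Iic
  -- Step 1: simplify the target event
  have hset1 : {ω | (∀ i ≤ m, Y i ω = (y₀ : ℤ)) ∧ X ω = x ∧ Y (X ω) ω = (y₀ : ℤ)}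
      = A ∩ {ω | X ω = x} := by
    ext ω
    constructor
    · rintro ⟨h1, h2, _⟩; exact ⟨h1, h2⟩
    · rintro ⟨h1, h2⟩
      exact ⟨h1, h2, by rw [h2]; exact h1 x hx⟩
  -- Step 2: exogeneity factorization
  have hprod : μ (A ∩ {ω | X ω = x}) = μ A * μ {ω | X ω = x} := by
    have hApre : A = (fun ω => fun i : Fin (m + 1) => Y (i : ℕ) ω) ⁻¹'
        {fun _ => (y₀ : ℤ)} := by
      ext ω
      simp only [Set.mem_preimage, Set.mem_singleton_iff, funext_iff, hA, Set.mem_setOf_eq]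
      constructor
      · intro h i; exact h i (Nat.lt_succ_iff.mp i.isLt)
      · intro h i hi; exact h ⟨i, Nat.lt_succ_of_le hi⟩
    have hXpre : {ω | X ω = x} = X ⁻¹' {x} := rfl
    rw [hApre, hXpre]
    exact hexo.measure_inter_preimage_eq_mul _ _ (measurableSet_singleton _)
      (measurableSet_singleton _)
  -- Step 3: a.e. monotonicity
  have hG : ∀ᵐ ω ∂μ, ∀ s t : ℕ, t < s → s ≤ m → Y t ω ≤ Y s ω ∧ Y s ω ≤ Y t ω + 1 := by
    rw [ae_all_iff]
    intro s
    rw [ae_all_iff]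
    intro t
    by_cases h1 : t < s
    · by_cases h2 : s ≤ m
      · filter_upwards [hMITE s t h1 h2] with ω hω _ _; exact hω
      · filter_upwards with ω h1' h2'; exact absurd h2' h2
    · filter_upwards with ω h1'; exact absurd h1' h1
  -- Step 4: A ∪ C0 =ᵐ Cm
  have haeq : (A ∪ C0 : Set Ω) =ᵐ[μ] Cm := by
    rw [Filter.eventuallyEq_set]
    filter_upwards [hG] with ω g
    have g0m : Y 0 ω ≤ Y m ω := by
      rcases Nat.eq_zero_or_pos m with h | h
      · rw [h]
      · exact (g m 0 h le_rfl).1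
    have gm0 : Y m ω ≤ Y 0 ω + 1 := by
      rcases Nat.eq_zero_or_pos m with h | h
      · rw [h]; omega
      · exact (g m 0 h le_rfl).2
    constructor
    · rintro (hA' | hC')
      · simp only [hA, Set.mem_setOf_eq] at hA' ⊢
        exact (hA' m le_rfl).le
      · simp only [hC0def, Set.mem_setOf_eq] at hC'
        simp only [hCmdef, Set.mem_setOf_eq]
        omega
    · intro hCm'
      simp only [hCmdef, Set.mem_setOf_eq] at hCm'
      by_cases h0 : Y 0 ω ≤ (y₀ : ℤ) - 1
      · exact Or.inr h0
      · left
        intro i hi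
        have h1 : Y 0 ω ≤ Y i ω := by
          rcases Nat.eq_zero_or_pos i with hi0 | hi0
          · rw [hi0]
          · exact (g i 0 hi0 hi).1
        have h2 : Y i ω ≤ Y m ω := by
          rcases eq_or_lt_of_le hi with him | him
          · rw [him]
          · exact (g m i him le_rfl).1
        omega
  -- Step 5: measure split
  have hdisj : Disjoint A C0 := by
    rw [Set.disjoint_left]
    intro ω hA' hC'
    have := hA' 0 (Nat.zero_le m)
    simp only [hC0def, Set.mem_setOf_eq] at hC'
    omega
  have hsplit : μ A + μ C0 = μ Cm := by
    rw [← measure_union hdisj hmC0, measure_congr haeq]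
  -- Step 6: conditional probabilities
  have hcond : ∀ c ≤ m, ∀ j : ℤ,
      μ[|{ω | X ω = c}] {ω | Y (X ω) ω = j} = μ {ω | Y c ω = j} := by
    intro c hc j
    rw [cond_apply (hmX c)]
    have hI : {ω | X ω = c} ∩ {ω | Y (X ω) ω = j} = X ⁻¹' {c} ∩ (Y c) ⁻¹' {j} := by
      ext ω
      simp only [Set.mem_inter_iff, Set.mem_setOf_eq, Set.mem_preimage,
        Set.mem_singleton_iff]
      constructor
      · rintro ⟨h1, h2⟩; rw [h1] at h2; exact ⟨h1, h2⟩
      · rintro ⟨h1, h2⟩; exact ⟨h1, by rw [h1]; exact h2⟩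
    rw [hI, ((hindep c hc).symm).measure_inter_preimage_eq_mul _ _
      (measurableSet_singleton _) (measurableSet_singleton _), ← mul_assoc,
      show X ⁻¹' {c} = {ω | X ω = c} from rfl,
      ENNReal.inv_mul_cancel (hpos c hc) (measure_ne_top μ _), one_mul]
    rfl
  -- Step 7: the sums
  have hsumM : ∑ j ∈ Finset.range (y₀ + 1),
      (μ[|{ω | X ω = m}] {ω | Y (X ω) ω = (j : ℤ)}).toReal = (μ Cm).toReal := by
    have hU : Cm = ⋃ j ∈ Finset.range (y₀ + 1), {ω | Y m ω = (j : ℤ)} := by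
      ext ω
      simp only [hCmdef, Set.mem_setOf_eq, Set.mem_iUnion, Finset.mem_range,
        exists_prop]
      constructor
      · intro h
        have h0 := (hval m le_rfl ω).1
        exact ⟨(Y m ω).toNat, by omega, by omega⟩
      · rintro ⟨j, hj, hje⟩; omega
    have hpd : (↑(Finset.range (y₀ + 1)) : Set ℕ).PairwiseDisjoint
        (fun j => {ω | Y m ω = (j : ℤ)}) := by
      intro i _ j _ hij
      rw [Function.onFun, Set.disjoint_left]
      intro ω h1 h2
      simp only [Set.mem_setOf_eq] at h1 h2
      exact hij (by exact_mod_cast h1.symm.trans h2)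
    rw [hU, measure_biUnion_finset hpd (fun j _ => hmY m _),
      ENNReal.toReal_sum (fun j _ => measure_ne_top μ _)]
    exact Finset.sum_congr rfl fun j _ => by rw [hcond m le_rfl (j : ℤ)]
  have hsum0 : ∑ j ∈ Finset.range y₀,
      (μ[|{ω | X ω = 0}] {ω | Y (X ω) ω = (j : ℤ)}).toReal = (μ C0).toReal := by
    have hU : C0 = ⋃ j ∈ Finset.range y₀, {ω | Y 0 ω = (j : ℤ)} := by
      ext ω
      simp only [hC0def, Set.mem_setOf_eq, Set.mem_iUnion, Finset.mem_range,
        exists_prop]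
      constructor
      · intro h
        have h0 := (hval 0 (Nat.zero_le m) ω).1
        exact ⟨(Y 0 ω).toNat, by omega, by omega⟩
      · rintro ⟨j, hj, hje⟩; omega
    have hpd : (↑(Finset.range y₀) : Set ℕ).PairwiseDisjoint
        (fun j => {ω | Y 0 ω = (j : ℤ)}) := by
      intro i _ j _ hij
      rw [Function.onFun, Set.disjoint_left]
      intro ω h1 h2
      simp only [Set.mem_setOf_eq] at h1 h2
      exact hij (by exact_mod_cast h1.symm.trans h2)
    rw [hU, measure_biUnion_finset hpd (fun j _ => hmY 0 _),
      ENNReal.toReal_sum (fun j _ => measure_ne_top μ _)]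
    exact Finset.sum_congr rfl fun j _ => by rw [hcond 0 (Nat.zero_le m) (j : ℤ)]
  -- Final assembly
  rw [hset1, hprod, hsumM, hsum0, ENNReal.toReal_mul]
  have hR := congrArg ENNReal.toReal hsplit
  rw [ENNReal.toReal_add (measure_ne_top μ _) (measure_ne_top μ _)] at hR
  have : (μ A).toReal = (μ Cm).toReal - (μ C0).toReal := by linarith
  rw [this]
end

section
/- Let V = {x ∈ ℝ^n : A x ≥ c} be a nonempty polyhedron (A an m×n real matrix, c ∈ ℝ^m). Then there exists a finite set S ⊆ V, depending only on V, such that for every h ∈ ℝ^n for which sup_{x ∈ V} hᵀx is finite and attained at some point of V, one has sup_{x ∈ V} hᵀx = max_{a ∈ S} hᵀa. -/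
open Finset

/-- A nonempty polyhedron admits a finite set S such that every
linear functional whose supremum over the polyhedron is finite and attained
achieves its maximum at some point of S. -/
theorem polyhedron_finite_candidate_set (n p : ℕ)
    (A : Matrix (Fin p) (Fin n) ℝ) (c : Fin p → ℝ)
    (V : Set (Fin n → ℝ)) (hV : V = {x | ∀ i, c i ≤ A.mulVec x i})
    (hne : V.Nonempty) :
    ∃ S : Finset (Fin n → ℝ), ↑S ⊆ V ∧
      ∀ h : Fin n → ℝ,
        (∃ x₀ ∈ V, ∀ x ∈ V, ∑ i, h i * x i ≤ ∑ i, h i * x₀ i) →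
          ∃ a ∈ S, ∀ x ∈ V, ∑ i, h i * x i ≤ ∑ i, h i * a i := by
  classical
  set F : Finset (Fin p) → Set (Fin n → ℝ) :=
    fun I => {x | x ∈ V ∧ ∀ i ∈ I, A.mulVec x i = c i} with hF
  let f : Finset (Fin p) → (Fin n → ℝ) :=
    fun I => if hI : (F I).Nonempty then hI.choose else hne.choose
  have hfV : ∀ I, f I ∈ V := by
    intro I
    simp only [f]
    split_ifs with hI
    · exact hI.choose_spec.1
    · exact hne.choose_spec
  refine ⟨Finset.univ.image f, ?_, ?_⟩
  · intro a ha
    simp only [coe_image, Set.mem_image] at ha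
    obtain ⟨I, _, rfl⟩ := ha
    exact hfV I
  · rintro h ⟨x₀, hx₀V, hmax⟩
    set I : Finset (Fin p) := Finset.univ.filter (fun i => A.mulVec x₀ i = c i) with hI
    have hFI : (F I).Nonempty := ⟨x₀, hx₀V, fun i hi => (Finset.mem_filter.mp hi).2⟩
    set a := f I with ha
    have haF : a ∈ F I := by
      simp only [ha, f, dif_pos hFI]
      exact hFI.choose_spec
    refine ⟨a, Finset.mem_image_of_mem f (Finset.mem_univ I), ?_⟩
    have key : ∑ i, h i * x₀ i ≤ ∑ i, h i * a i := by
      set g : Fin p → ℝ := fun i =>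
        if A.mulVec x₀ i = c i then 1
        else (A.mulVec x₀ i - c i) / (|A.mulVec x₀ i - A.mulVec a i| + 1) with hg
      set s : Finset ℝ := insert 1 (Finset.univ.image g) with hs
      have hs1 : (1:ℝ) ∈ s := Finset.mem_insert_self _ _
      set ε := s.min' ⟨1, hs1⟩ with hε
      have hεmem := s.min'_mem ⟨1, hs1⟩
      have hgpos : ∀ i, 0 < g i := by
        intro i
        simp only [hg]
        split_ifs with hi
        · exact one_pos
        · apply div_pos
          · have hx := hx₀V
            rw [hV] at hx
            exact sub_pos.mpr (lt_of_le_of_ne (hx i) (fun e => hi e.symm))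
          · positivity
      have hεpos : 0 < ε := by
        rw [← hε] at hεmem
        rw [hε] at hεmem ⊢
        rw [← hε] at hεmem ⊢
        rcases Finset.mem_insert.mp hεmem with h1 | h2
        · rw [h1]; exact one_pos
        · obtain ⟨i, _, hi⟩ := Finset.mem_image.mp h2
          rw [← hi]; exact hgpos i
      have hεle : ∀ i, ε ≤ g i := fun i =>
        Finset.min'_le s (g i)
          (Finset.mem_insert_of_mem (Finset.mem_image_of_mem g (Finset.mem_univ i)))
      set z : Fin n → ℝ := x₀ + ε • (x₀ - a) with hz
      have hzV : z ∈ V := by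
        rw [hV]
        intro i
        have hlin : A.mulVec z i = A.mulVec x₀ i + ε * (A.mulVec x₀ i - A.mulVec a i) := by
          simp [hz, Matrix.mulVec_add, Matrix.mulVec_smul, Matrix.mulVec_sub,
            Pi.add_apply, Pi.smul_apply, Pi.sub_apply, smul_eq_mul]
        rw [hlin]
        by_cases hi : A.mulVec x₀ i = c i
        · have hai : A.mulVec a i = c i :=
            haF.2 i (Finset.mem_filter.mpr ⟨Finset.mem_univ i, hi⟩)
          rw [hi, hai]
          simp
        · have hgi : g i = (A.mulVec x₀ i - c i) / (|A.mulVec x₀ i - A.mulVec a i| + 1) := by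
            simp [hg, hi]
          set t := A.mulVec x₀ i - A.mulVec a i with ht
          have hx := hx₀V
          rw [hV] at hx
          have h1 : ε * |t| ≤ (A.mulVec x₀ i - c i) := by
            calc ε * |t| ≤ g i * |t| :=
                  mul_le_mul_of_nonneg_right (hεle i) (abs_nonneg t)
              _ = (A.mulVec x₀ i - c i) * (|t| / (|t| + 1)) := by rw [hgi]; ring
              _ ≤ (A.mulVec x₀ i - c i) * 1 := by
                  apply mul_le_mul_of_nonneg_left
                  · rw [div_le_one (by positivity)]; linarith
                  · linarith [hx i]
              _ = _ := mul_one _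
          have h2 : -(ε * |t|) ≤ ε * t := by
            nlinarith [neg_abs_le t, hεpos.le]
          linarith
      have hmz := hmax z hzV
      have hzs : ∑ i, h i * z i
          = ∑ i, h i * x₀ i + ε * (∑ i, h i * x₀ i - ∑ i, h i * a i) := by
        have hterm : ∀ i, h i * z i
            = h i * x₀ i + (ε * (h i * x₀ i) - ε * (h i * a i)) := by
          intro i; simp [hz, smul_eq_mul]; ring
        rw [Finset.sum_congr rfl (fun i _ => hterm i)]
        simp only [Finset.sum_add_distrib, Finset.sum_sub_distrib, ← Finset.mul_sum]
        ring
      rw [hzs] at hmz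
      nlinarith [hεpos]
    intro x hx
    exact le_trans (hmax x hx) key
end

section
/- Fix a real m×n matrix A and a vector c ∈ ℝ^n. There exists a constant M ≥ 0, depending only on A and c, with the following property: for all b, b' ∈ ℝ^m such that both linear programs 'maximize cᵀx subject to A x = b, x ≥ 0' and 'maximize cᵀx subject to A x = b', x ≥ 0' are feasible with finite attained optimal values v(b) and v(b'), one has |v(b) − v(b')| ≤ M · ‖b − b'‖. -/
open Finset

/-- Fourier–Motzkin elimination step. -/
theorem fourier_motzkin {E : Type*} [AddCommGroup E] [Module ℝ E]
    {ι : Type} [Fintype ι] (a : ι → E →ₗ[ℝ] ℝ) (s : ι → ℝ) :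
    ∃ (κ : Type) (_ : Fintype κ) (g : κ → E →ₗ[ℝ] ℝ),
      ∀ u : E, (∃ t : ℝ, ∀ j, a j u + s j * t ≤ 0) ↔ ∀ i, g i u ≤ 0 := by
  classical
  refine ⟨(ι × ι) ⊕ ι, inferInstance,
    Sum.elim (fun jk => if 0 < s jk.1 ∧ s jk.2 < 0 then
        s jk.1 • a jk.2 + (-(s jk.2)) • a jk.1 else 0)
      (fun j => if s j = 0 then a j else 0), fun u => ?_⟩
  constructor
  · rintro ⟨t, ht⟩ i
    rcases i with ⟨j, k⟩ | j
    · simp only [Sum.elim_inl]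
      split_ifs with h
      · obtain ⟨hj, hk⟩ := h
        have h1 : s j * (a k u + s k * t) ≤ 0 :=
          mul_nonpos_of_nonneg_of_nonpos hj.le (ht k)
        have h2 : (-(s k)) * (a j u + s j * t) ≤ 0 :=
          mul_nonpos_of_nonneg_of_nonpos (by linarith) (ht j)
        simp only [LinearMap.add_apply, LinearMap.smul_apply, smul_eq_mul]
        nlinarith [ht j, ht k]
      · simp
    · simp only [Sum.elim_inr]
      split_ifs with h
      · have := ht j; rw [h] at this; linarith
      · simp
  · intro hg
    set Ne : Finset ι := univ.filter (fun k => s k < 0) with hNe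
    set P : Finset ι := univ.filter (fun j => 0 < s j) with hP
    have hzero : ∀ j, s j = 0 → a j u ≤ 0 := by
      intro j hj
      have := hg (Sum.inr j)
      simpa [hj] using this
    have hpair : ∀ j k, 0 < s j → s k < 0 →
        s j * a k u + (-(s k)) * a j u ≤ 0 := by
      intro j k hj hk
      have := hg (Sum.inl (j, k))
      simpa [hj, hk, LinearMap.add_apply, LinearMap.smul_apply, smul_eq_mul] using this
    by_cases hNeNe : Ne.Nonempty
    · refine ⟨Ne.sup' hNeNe (fun k => a k u / (-(s k))), fun j => ?_⟩
      rcases lt_trichotomy (s j) 0 with hj | hj | hj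
      · have hmem : j ∈ Ne := by simp [hNe, hj]
        have hle : a j u / (-(s j)) ≤ Ne.sup' hNeNe (fun k => a k u / (-(s k))) :=
          Finset.le_sup' (fun k => a k u / (-(s k))) hmem
        rw [div_le_iff₀ (by linarith : (0:ℝ) < -(s j))] at hle
        nlinarith
      · have := hzero j hj; rw [hj]; linarith
      · obtain ⟨k, hk, hkeq⟩ := Finset.exists_mem_eq_sup' hNeNe (fun k => a k u / (-(s k)))
        have hks : s k < 0 := by simpa [hNe] using hk
        have key := hpair j k hj hks
        rw [hkeq]
        have hd : (0:ℝ) < -(s k) := by linarith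
        have heq : a j u + s j * (a k u / (-(s k))) =
            (s j * a k u + (-(s k)) * a j u) / (-(s k)) := by
          have hk0 : s k ≠ 0 := ne_of_lt hks
          field_simp
          ring
        rw [heq]
        exact div_nonpos_of_nonpos_of_nonneg key hd.le
    · by_cases hPNe : P.Nonempty
      · refine ⟨P.inf' hPNe (fun j => -(a j u) / s j), fun j => ?_⟩
        rcases lt_trichotomy (s j) 0 with hj | hj | hj
        · exact absurd (by simp [hNe, hj] : j ∈ Ne) (by simp [Finset.not_nonempty_iff_eq_empty.1 hNeNe])
        · have := hzero j hj; rw [hj]; linarith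
        · have hmem : j ∈ P := by simp [hP, hj]
          have hle : P.inf' hPNe (fun j => -(a j u) / s j) ≤ -(a j u) / s j :=
            Finset.inf'_le _ hmem
          rw [le_div_iff₀ hj] at hle
          nlinarith
      · refine ⟨0, fun j => ?_⟩
        have hj : s j = 0 := by
          rcases lt_trichotomy (s j) 0 with h | h | h
          · exact absurd (by simp [hNe, h] : j ∈ Ne) (by simp [Finset.not_nonempty_iff_eq_empty.1 hNeNe])
          · exact h
          · exact absurd (by simp [hP, h] : j ∈ P) (by simp [Finset.not_nonempty_iff_eq_empty.1 hPNe])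
        have := hzero j hj
        rw [hj]; linarith

theorem cone_polyhedral {E : Type*} [AddCommGroup E] [Module ℝ E]
    (κ0 : Type) [Fintype κ0] (g0 : κ0 → E →ₗ[ℝ] ℝ)
    (h0 : ∀ w : E, w = 0 ↔ ∀ i, g0 i w ≤ 0)
    (m : ℕ) (col : Fin m → E) :
    ∃ (κ : Type) (_ : Fintype κ) (g : κ → E →ₗ[ℝ] ℝ),
      ∀ w : E, (∃ x : Fin m → ℝ, (∀ j, 0 ≤ x j) ∧ ∑ j, x j • col j = w) ↔
        ∀ i, g i w ≤ 0 := by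
  induction m with
  | zero =>
    refine ⟨κ0, inferInstance, g0, fun w => ?_⟩
    rw [← h0]
    constructor
    · rintro ⟨x, -, hx⟩
      simpa using hx.symm
    · rintro rfl
      exact ⟨fun j => 0, fun j => le_refl 0, by simp⟩
  | succ m ih =>
    obtain ⟨κ, instκ, g, hg⟩ := ih (fun j => col j.succ)
    -- w ∈ cone ↔ ∃ t, 0 ≤ t ∧ ∀ i, g i (w - t • col 0) ≤ 0
    have hstep : ∀ w : E,
        (∃ x : Fin (m+1) → ℝ, (∀ j, 0 ≤ x j) ∧ ∑ j, x j • col j = w) ↔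
        ∃ t : ℝ, 0 ≤ t ∧ ∀ i, g i (w - t • col 0) ≤ 0 := by
      intro w
      constructor
      · rintro ⟨x, hx, hsum⟩
        refine ⟨x 0, hx 0, ?_⟩
        rw [← hg]
        refine ⟨fun j => x j.succ, fun j => hx j.succ, ?_⟩
        rw [Fin.sum_univ_succ] at hsum
        rw [← hsum]; abel
      · rintro ⟨t, ht, hi⟩
        rw [← hg] at hi
        obtain ⟨x', hx', hsum⟩ := hi
        refine ⟨Fin.cons t x', ?_, ?_⟩
        · intro j
          refine Fin.cases ?_ ?_ j
          · simpa using ht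
          · intro j'; simpa using hx' j'
        · rw [Fin.sum_univ_succ]
          simp only [Fin.cons_zero, Fin.cons_succ]
          rw [hsum]; abel
    -- apply FM with index Option κ
    obtain ⟨κ', instκ', g', hg'⟩ := fourier_motzkin (ι := Option κ)
      (Option.elim · (0 : E →ₗ[ℝ] ℝ) g) (Option.elim · (-1) (fun i => -(g i (col 0))))
    refine ⟨κ', instκ', g', fun w => ?_⟩
    rw [hstep, ← hg']
    constructor
    · rintro ⟨t, ht, hi⟩
      refine ⟨t, fun j => ?_⟩
      rcases j with _ | i
      · simp only [Option.elim]; simp; linarith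
      · simp only [Option.elim]
        have := hi i
        rw [map_sub, map_smul, smul_eq_mul] at this
        linarith
    · rintro ⟨t, hj⟩
      have h0t := hj none
      simp only [Option.elim] at h0t
      refine ⟨t, by simp at h0t; linarith, fun i => ?_⟩
      have := hj (some i)
      simp only [Option.elim] at this
      rw [map_sub, map_smul, smul_eq_mul]
      linarith

/-- Lipschitz continuity of the LP optimal value in the right-hand
side vector, with a constant depending only on A and c. -/
theorem lp_value_lipschitz (p n : ℕ)
    (A : Matrix (Fin p) (Fin n) ℝ) (c : Fin n → ℝ) :
    ∃ M : ℝ, 0 ≤ M ∧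
      ∀ b b' : Fin p → ℝ, ∀ v v' : ℝ,
        (∃ x : Fin n → ℝ, (∀ i, 0 ≤ x i) ∧ A.mulVec x = b ∧
            (∑ i, c i * x i) = v ∧
            ∀ y : Fin n → ℝ, (∀ i, 0 ≤ y i) → A.mulVec y = b →
              (∑ i, c i * y i) ≤ v) →
        (∃ x' : Fin n → ℝ, (∀ i, 0 ≤ x' i) ∧ A.mulVec x' = b' ∧
            (∑ i, c i * x' i) = v' ∧
            ∀ y : Fin n → ℝ, (∀ i, 0 ≤ y i) → A.mulVec y = b' →
              (∑ i, c i * y i) ≤ v') →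
        |v - v'| ≤ M * ‖b - b'‖ := by
  classical
  -- E := (Fin p → ℝ) × ℝ ; base representation of {0}
  set E := (Fin p → ℝ) × ℝ
  let base : (Fin p ⊕ Unit) → E →ₗ[ℝ] ℝ :=
    Sum.elim (fun i => (LinearMap.proj i).comp (LinearMap.fst ℝ (Fin p → ℝ) ℝ))
      (fun _ => LinearMap.snd ℝ (Fin p → ℝ) ℝ)
  let g0 : ((Fin p ⊕ Unit) × Bool) → E →ₗ[ℝ] ℝ :=
    fun z => if z.2 then base z.1 else -(base z.1)
  have h0 : ∀ w : E, w = 0 ↔ ∀ i, g0 i w ≤ 0 := by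
    intro w
    constructor
    · rintro rfl i
      rcases i with ⟨z, bb⟩
      cases bb <;> simp [g0, base]
    · intro h
      have hval : ∀ z, base z w = 0 := by
        intro z
        have h1 := h (z, true)
        have h2 := h (z, false)
        simp only [g0] at h1 h2
        rw [if_pos trivial] at h1
        rw [if_neg (by simp), LinearMap.neg_apply] at h2
        linarith
      have h1 : w.1 = 0 := by
        funext i
        have := hval (Sum.inl i)
        simp [base] at this; exact this
      have h2 : w.2 = 0 := by
        have := hval (Sum.inr ())
        simp [base] at this; exact this
      exact Prod.ext h1 h2
  -- the cone generated by columns (A_j, c_j)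
  obtain ⟨κ, instκ, g, hg⟩ := cone_polyhedral ((Fin p ⊕ Unit) × Bool) g0 h0 n
    (fun j => (fun i => A i j, c j))
  -- membership translation
  have hmem : ∀ (b : Fin p → ℝ) (t : ℝ),
      (∃ x : Fin n → ℝ, (∀ j, 0 ≤ x j) ∧ A.mulVec x = b ∧ (∑ i, c i * x i) = t) ↔
      ∀ i, g i (b, t) ≤ 0 := by
    intro b t
    rw [← hg (b, t)]
    have hsum : ∀ x : Fin n → ℝ,
        (∑ j, x j • ((fun i => A i j, c j) : E)) = (A.mulVec x, ∑ i, c i * x i) := by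
      intro x
      refine Prod.ext ?_ ?_
      · rw [Prod.fst_sum]
        funext i
        simp only [Finset.sum_apply, Pi.smul_apply, smul_eq_mul]
        simp [Matrix.mulVec, dotProduct, mul_comm]
      · rw [Prod.snd_sum]
        simp [smul_eq_mul, mul_comm]
    constructor
    · rintro ⟨x, hx, hb, ht⟩
      exact ⟨x, hx, by rw [hsum x, hb, ht]⟩
    · rintro ⟨x, hx, hs⟩
      rw [hsum x] at hs
      exact ⟨x, hx, congrArg Prod.fst hs, congrArg Prod.snd hs⟩
  -- decompose g i (b, t) = φ i b + t * σ i
  let φ : κ → (Fin p → ℝ) →ₗ[ℝ] ℝ := fun i => (g i).comp (LinearMap.inl ℝ (Fin p → ℝ) ℝ)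
  let σ : κ → ℝ := fun i => g i (0, 1)
  have hdec : ∀ i (b : Fin p → ℝ) (t : ℝ), g i (b, t) = φ i b + t * σ i := by
    intro i b t
    have : ((b, t) : E) = (b, 0) + t • ((0 : Fin p → ℝ), (1:ℝ)) := by
      refine Prod.ext ?_ ?_ <;> simp
    rw [this, map_add, map_smul, smul_eq_mul]
    rfl
  let ψ : κ → (Fin p → ℝ) →L[ℝ] ℝ := fun i => LinearMap.toContinuousLinearMap (φ i)
  refine ⟨∑ i, if 0 < σ i then ‖ψ i‖ / σ i else 0, ?_, ?_⟩
  · refine Finset.sum_nonneg fun i _ => ?_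
    split_ifs with h
    · positivity
    · exact le_rfl
  set M := ∑ i, if 0 < σ i then ‖ψ i‖ / σ i else 0 with hM
  -- one-sided key lemma
  have key : ∀ (b b' : Fin p → ℝ) (v v' : ℝ),
      (∃ x : Fin n → ℝ, (∀ i, 0 ≤ x i) ∧ A.mulVec x = b ∧
          (∑ i, c i * x i) = v ∧
          ∀ y : Fin n → ℝ, (∀ i, 0 ≤ y i) → A.mulVec y = b →
            (∑ i, c i * y i) ≤ v) →
      (∃ x' : Fin n → ℝ, (∀ i, 0 ≤ x' i) ∧ A.mulVec x' = b' ∧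
          (∑ i, c i * x' i) = v' ∧
          ∀ y : Fin n → ℝ, (∀ i, 0 ≤ y i) → A.mulVec y = b' →
            (∑ i, c i * y i) ≤ v') →
      v - v' ≤ M * ‖b - b'‖ := by
    rintro b b' v v' ⟨x, hx, hxb, hxv, -⟩ ⟨x', hx', hxb', hxv', hmax'⟩
    have hbv : ∀ i, g i (b, v) ≤ 0 := (hmem b v).1 ⟨x, hx, hxb, hxv⟩
    have hbv' : ∀ i, g i (b', v') ≤ 0 := (hmem b' v').1 ⟨x', hx', hxb', hxv'⟩
    have hub : ∀ t : ℝ, (∀ i, g i (b', t) ≤ 0) → t ≤ v' := by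
      intro t ht
      obtain ⟨y, hy, hyb, hyt⟩ := (hmem b' t).2 ht
      rw [← hyt]
      exact hmax' y hy hyb
    -- the set of constraints increasing in t is nonempty
    set Iplus : Finset κ := Finset.univ.filter (fun i => 0 < σ i) with hIplus
    have hIplusNe : Iplus.Nonempty := by
      by_contra hcon
      rw [Finset.not_nonempty_iff_eq_empty] at hcon
      have hall : ∀ i, σ i ≤ 0 := by
        intro i
        by_contra hi
        push_neg at hi
        have : i ∈ Iplus := by simp [hIplus, hi]
        simp [hcon] at this
      have : v' + 1 ≤ v' := by
        refine hub (v' + 1) fun i => ?_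
        rw [hdec]
        have := hbv' i
        rw [hdec] at this
        nlinarith [hall i]
      linarith
    obtain ⟨i0, hi0mem, hi0⟩ := Finset.exists_mem_eq_inf' hIplusNe
      (fun i => -(φ i b') / σ i)
    have hi0pos : 0 < σ i0 := by simpa [hIplus] using hi0mem
    set tstar := Iplus.inf' hIplusNe (fun i => -(φ i b') / σ i) with htstar
    have hvle : v' ≤ tstar := by
      refine Finset.le_inf' hIplusNe _ fun i hi => ?_
      have hipos : 0 < σ i := by simpa [hIplus] using hi
      have := hbv' i
      rw [hdec] at this
      rw [le_div_iff₀ hipos]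
      linarith
    have htle : tstar ≤ v' := by
      refine hub tstar fun i => ?_
      rw [hdec]
      by_cases hipos : 0 < σ i
      · have hi : i ∈ Iplus := by simp [hIplus, hipos]
        have hle : tstar ≤ -(φ i b') / σ i := Finset.inf'_le _ hi
        rw [le_div_iff₀ hipos] at hle
        linarith
      · push_neg at hipos
        have := hbv' i
        rw [hdec] at this
        nlinarith
    have hveq : v' = -(φ i0 b') / σ i0 := by
      rw [← hi0]
      exact le_antisymm hvle htle
    have hvb : v ≤ -(φ i0 b) / σ i0 := by
      have := hbv i0
      rw [hdec] at this
      rw [le_div_iff₀ hi0pos]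
      linarith
    have hnorm : |φ i0 (b' - b)| ≤ ‖ψ i0‖ * ‖b - b'‖ := by
      have h1 : φ i0 (b' - b) = ψ i0 (b' - b) := by
        simp [ψ]
      have h2 := (ψ i0).le_opNorm (b' - b)
      rw [norm_sub_rev] at h2
      rw [h1]
      exact h2
    have hterm : ‖ψ i0‖ / σ i0 ≤ M := by
      rw [hM]
      have : (if 0 < σ i0 then ‖ψ i0‖ / σ i0 else 0) = ‖ψ i0‖ / σ i0 := if_pos hi0pos
      rw [← this]
      refine Finset.single_le_sum (f := fun i => if 0 < σ i then ‖ψ i‖ / σ i else 0) (fun i _ => ?_) (Finset.mem_univ i0)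
      split_ifs with h
      · positivity
      · exact le_rfl
    have hnormnn : (0:ℝ) ≤ ‖b - b'‖ := norm_nonneg _
    calc v - v' ≤ -(φ i0 b) / σ i0 - (-(φ i0 b') / σ i0) := by
          rw [hveq] at *; linarith
      _ = (φ i0 (b' - b)) / σ i0 := by rw [map_sub]; ring
      _ ≤ |φ i0 (b' - b)| / σ i0 := by
          apply div_le_div_of_nonneg_right (le_abs_self _) hi0pos.le
      _ ≤ (‖ψ i0‖ * ‖b - b'‖) / σ i0 := by
          apply div_le_div_of_nonneg_right hnorm hi0pos.le
      _ = (‖ψ i0‖ / σ i0) * ‖b - b'‖ := by ring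
      _ ≤ M * ‖b - b'‖ := mul_le_mul_of_nonneg_right hterm hnormnn
  intro b b' v v' h1 h2
  rw [abs_sub_le_iff]
  refine ⟨key b b' v v' h1 h2, ?_⟩
  rw [norm_sub_rev]
  exact key b' b v' v h2 h1
end

section
/- Let X, Y₀, Y₁ be random variables with X, Y₀, Y₁ ∈ {0,1}, observed outcome Y = Y_X, each Y_x independent of X with 0 < P(X=1) < 1, and P(Y₀ = 1 ∧ Y₁ = 0) = 0 (monotonicity). Then P(Y₀ = 0 ∧ Y₁ = 1) = P(Y = 1 | X = 1) − P(Y = 1 | X = 0). -/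
open MeasureTheory ProbabilityTheory
open scoped ProbabilityTheory

/-- Under exogeneity, consistency and monotonicity, the probability
of necessity and sufficiency P(Y₀=0, Y₁=1) equals the observational risk
difference P(Y=1|X=1) − P(Y=1|X=0). -/
theorem pns_identification_binary {Ω : Type*} [MeasurableSpace Ω]
    (μ : Measure Ω) [IsProbabilityMeasure μ]
    (X : Ω → ℕ) (hX : Measurable X) (hXb : ∀ ω, X ω ≤ 1)
    (Y0 Y1 : Ω → ℤ) (hY0 : Measurable Y0) (hY1 : Measurable Y1)
    (hb0 : ∀ ω, Y0 ω = 0 ∨ Y0 ω = 1) (hb1 : ∀ ω, Y1 ω = 0 ∨ Y1 ω = 1)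
    (Yobs : Ω → ℤ) (hcons : ∀ ω, Yobs ω = if X ω = 1 then Y1 ω else Y0 ω)
    (hind0 : IndepFun Y0 X μ) (hind1 : IndepFun Y1 X μ)
    (hp1 : μ {ω | X ω = 1} ≠ 0) (hp0 : μ {ω | X ω = 0} ≠ 0)
    (hmono : μ {ω | Y0 ω = 1 ∧ Y1 ω = 0} = 0) :
    (μ {ω | Y0 ω = 0 ∧ Y1 ω = 1}).toReal
      = (μ[|{ω | X ω = 1}] {ω | Yobs ω = 1}).toReal
        - (μ[|{ω | X ω = 0}] {ω | Yobs ω = 1}).toReal := by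
  have hmsX1 : MeasurableSet {ω | X ω = 1} := hX (measurableSet_singleton 1)
  have hmsX0 : MeasurableSet {ω | X ω = 0} := hX (measurableSet_singleton 0)
  have hfin1 : μ {ω | X ω = 1} ≠ ⊤ := measure_ne_top μ _
  have hfin0 : μ {ω | X ω = 0} ≠ ⊤ := measure_ne_top μ _
  -- conditional probabilities equal marginal counterfactual probabilities
  have hc1 : μ[|{ω | X ω = 1}] {ω | Yobs ω = 1} = μ {ω | Y1 ω = 1} := by
    rw [cond_apply hmsX1]
    have hset : {ω | X ω = 1} ∩ {ω | Yobs ω = 1}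
        = Y1 ⁻¹' {1} ∩ X ⁻¹' {1} := by
      ext ω
      simp only [Set.mem_inter_iff, Set.mem_setOf_eq, Set.mem_preimage,
        Set.mem_singleton_iff, hcons ω]
      constructor
      · rintro ⟨h1, h2⟩; rw [if_pos h1] at h2; exact ⟨h2, h1⟩
      · rintro ⟨h1, h2⟩; exact ⟨h2, by rw [if_pos h2]; exact h1⟩
    rw [hset, hind1.measure_inter_preimage_eq_mul _ _ (measurableSet_singleton 1)
      (measurableSet_singleton 1)]
    have : X ⁻¹' {1} = {ω | X ω = 1} := rfl
    rw [this, mul_comm, mul_assoc, ENNReal.mul_inv_cancel hp1 hfin1, mul_one]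
    rfl
  have hc0 : μ[|{ω | X ω = 0}] {ω | Yobs ω = 1} = μ {ω | Y0 ω = 1} := by
    rw [cond_apply hmsX0]
    have hset : {ω | X ω = 0} ∩ {ω | Yobs ω = 1}
        = Y0 ⁻¹' {1} ∩ X ⁻¹' {0} := by
      ext ω
      simp only [Set.mem_inter_iff, Set.mem_setOf_eq, Set.mem_preimage,
        Set.mem_singleton_iff, hcons ω]
      constructor
      · rintro ⟨h1, h2⟩
        rw [if_neg (by omega)] at h2
        exact ⟨h2, h1⟩
      · rintro ⟨h1, h2⟩
        exact ⟨h2, by rw [if_neg (by omega)]; exact h1⟩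
    rw [hset, hind0.measure_inter_preimage_eq_mul _ _ (measurableSet_singleton 1)
      (measurableSet_singleton 0)]
    have : X ⁻¹' {0} = {ω | X ω = 0} := rfl
    rw [this, mul_comm, mul_assoc, ENNReal.mul_inv_cancel hp0 hfin0, mul_one]
    rfl
  rw [hc1, hc0]
  -- split events
  have hms01 : MeasurableSet {ω | Y0 ω = 0 ∧ Y1 ω = 1} :=
    (hY0 (measurableSet_singleton 0)).inter (hY1 (measurableSet_singleton 1))
  have hms11 : MeasurableSet {ω | Y0 ω = 1 ∧ Y1 ω = 1} :=
    (hY0 (measurableSet_singleton 1)).inter (hY1 (measurableSet_singleton 1))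
  have hsplit1 : μ {ω | Y1 ω = 1}
      = μ {ω | Y0 ω = 0 ∧ Y1 ω = 1} + μ {ω | Y0 ω = 1 ∧ Y1 ω = 1} := by
    rw [← measure_union ?_ hms11]
    · congr 1
      ext ω
      have := hb0 ω
      simp only [Set.mem_setOf_eq, Set.mem_union]
      tauto
    · rw [Set.disjoint_left]
      rintro ω ⟨h, -⟩ ⟨h', -⟩
      omega
  have hsplit0 : μ {ω | Y0 ω = 1} = μ {ω | Y0 ω = 1 ∧ Y1 ω = 1} := by
    have : μ {ω | Y0 ω = 1}
        = μ ({ω | Y0 ω = 1 ∧ Y1 ω = 0} ∪ {ω | Y0 ω = 1 ∧ Y1 ω = 1}) := by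
      congr 1
      ext ω
      have := hb1 ω
      simp only [Set.mem_setOf_eq, Set.mem_union]
      tauto
    rw [this, measure_union ?_ hms11, hmono, zero_add]
    rw [Set.disjoint_left]
    rintro ω ⟨-, h⟩ ⟨-, h'⟩
    omega
  rw [hsplit1, hsplit0]
  rw [ENNReal.toReal_add (measure_ne_top μ _) (measure_ne_top μ _)]
  ring
end
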